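/- Every real number x ∈ [-1,1] has a signed digit representation: there exists p : ℕ → {-1,0,1} with x = Σ_{i=0}^∞ p_i · 2^{-(i+1)}. -/

import Mathlib

/-! Greedy expansion: keep a remainder `r` in `[-1, 1]`, emit the digit `sign r` and pass to
`2 * r - sign r`, which again lies in `[-1, 1]`. After `n` steps the emitted digits reproduce `x` up to
`r / 2 ^ n`, which tends to `0`. -/

open Finset Filter Topology

section SignedDigits

variable {α : Type*} [CommRing α] [LinearOrder α] [IsStrictOrderedRing α]

theorem abs_sign_le_one (y : α) : |(SignType.sign y : α)| ≤ 1 := by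
  rcases lt_trichotomy y 0 with hy | rfl | hy <;> simp [*]

theorem abs_two_mul_sub_sign_le_one {y : α} (hy : |y| ≤ 1) : |2 * y - SignType.sign y| ≤ 1 := by
  obtain ⟨hlo, hhi⟩ := abs_le.mp hy
  rw [abs_le]
  rcases lt_trichotomy y 0 with hy₀ | rfl | hy₀
  · rw [sign_neg hy₀, SignType.coe_neg_one]; constructor <;> linarith
  · simp
  · rw [sign_pos hy₀, SignType.coe_one]; constructor <;> linarith

end SignedDigits

noncomputable def signedDigitRemainder (x : ℝ) : ℕ → ℝ
  | 0 => x
  | n + 1 => 2 * signedDigitRemainder x n - SignType.sign (signedDigitRemainder x n)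

noncomputable def signedDigit (x : ℝ) (n : ℕ) : ℤ := SignType.sign (signedDigitRemainder x n)

theorem signedDigit_eq_neg_one_or_zero_or_one (x : ℝ) (n : ℕ) :
    signedDigit x n = -1 ∨ signedDigit x n = 0 ∨ signedDigit x n = 1 := by
  unfold signedDigit
  cases SignType.sign (signedDigitRemainder x n) <;> simp

theorem abs_signedDigitRemainder_le_one {x : ℝ} (hx : |x| ≤ 1) (n : ℕ) :
    |signedDigitRemainder x n| ≤ 1 := by
  induction n with
  | zero => exact hx
  | succ n ih => exact abs_two_mul_sub_sign_le_one ih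

theorem sum_range_div_two_pow_add_div_two_pow {r d : ℕ → ℝ}
    (hr : ∀ n, r (n + 1) = 2 * r n - d n) (n : ℕ) :
    ∑ i ∈ range n, d i / 2 ^ (i + 1) + r n / 2 ^ n = r 0 := by
  induction n with
  | zero => simp
  | succ n ih =>
    rw [sum_range_succ, hr, ← ih]
    field_simp
    ring

theorem summable_div_two_pow_succ {d : ℕ → ℝ} {C : ℝ} (hd : ∀ i, |d i| ≤ C) :
    Summable fun i ↦ d i / 2 ^ (i + 1) := by
  refine Summable.of_norm_bounded ((summable_geometric_two.mul_left C).mul_right (1 / 2)) fun i ↦ ?_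
  rw [Real.norm_eq_abs, abs_div, abs_pow, abs_two, pow_succ, one_div_pow]
  field_simp
  exact hd i

theorem tendsto_div_two_pow_of_abs_le {r : ℕ → ℝ} {C : ℝ} (hr : ∀ n, |r n| ≤ C) :
    Tendsto (fun n ↦ r n / 2 ^ n) atTop (𝓝 0) := by
  have hC : Tendsto (fun n : ℕ ↦ C * (1 / 2) ^ n) atTop (𝓝 0) := by
    simpa using (tendsto_pow_atTop_nhds_zero_of_lt_one (r := (1 / 2 : ℝ)) (by norm_num)
      (by norm_num)).const_mul C
  refine squeeze_zero_norm (fun n ↦ ?_) hC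
  rw [Real.norm_eq_abs, abs_div, abs_pow, abs_two, one_div_pow]
  field_simp
  exact hr n

theorem hasSum_signedDigit {x : ℝ} (hx : |x| ≤ 1) :
    HasSum (fun i ↦ (signedDigit x i : ℝ) / 2 ^ (i + 1)) x := by
  have hdigit : ∀ i, (signedDigit x i : ℝ) = SignType.sign (signedDigitRemainder x i) :=
    fun i ↦ SignType.intCast_cast _
  have hpartial (n : ℕ) : ∑ i ∈ range n, (signedDigit x i : ℝ) / 2 ^ (i + 1) =
      x - signedDigitRemainder x n / 2 ^ n := by
    rw [eq_sub_iff_add_eq]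
    simp only [hdigit]
    exact sum_range_div_two_pow_add_div_two_pow (fun _ ↦ rfl) n
  rw [(summable_div_two_pow_succ fun i ↦ (hdigit i).symm ▸ abs_sign_le_one _).hasSum_iff_tendsto_nat]
  simp only [hpartial]
  simpa using tendsto_const_nhds.sub
    (tendsto_div_two_pow_of_abs_le (abs_signedDigitRemainder_le_one hx))

theorem exists_signed_digit_representation (x : ℝ) (h1 : -1 ≤ x) (h2 : x ≤ 1) :
    ∃ p : ℕ → ℤ, (∀ i, p i = -1 ∨ p i = 0 ∨ p i = 1) ∧
      x = ∑' i : ℕ, (p i : ℝ) / 2 ^ (i + 1) :=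
  ⟨signedDigit x, signedDigit_eq_neg_one_or_zero_or_one x,
    (hasSum_signedDigit (abs_le.mpr ⟨h1, h2⟩)).tsum_eq.symm⟩
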